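/- Let (X_k) be a d-type GW process and a ∈ (0,∞)^d with f_i(a) < ∞, and let (X̄_k) be the associated process. Then for every starting state k ∈ ℕ^d and every n ∈ ℕ^d, P_k(N̄ = n) = a^{n-k} f(a)^{-n} P_k(N = n), where a^{n-k} = ∏_i a_i^{n_i - k_i} and f(a)^n = ∏_i f_i(a)^{n_i}. -/

import Mathlib

/-! Tilting every offspring law by `k ↦ a^k / f_i(a)` multiplies each one-step transition
probability `P_1(x, y)` by `f(a)^{-x} a^y`, because exponential weights factor through
convolution. Along a path `x_0 = k, x_1, …` absorbed at `0`, the product of these factors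
telescopes to `f(a)^{-(x_0 + x_1 + ⋯)} a^{x_1 + x_2 + ⋯} = f(a)^{-N} a^{N - k}`, which depends
on the path only through its total progeny `N`. Summing over the countably many paths with
`N = n` gives the identity. -/

open MeasureTheory Filter Topology
open scoped ENNReal NNReal

noncomputable section

namespace GW

variable {d : ℕ}

/-- `a^k = ∏_j a_j^{k_j}` for a multi-index `k`. -/
def npow (a : Fin d → ℝ) (k : Fin d → ℕ) : ℝ := ∏ j, a j ^ k j

/-- Dirac mass at `0` on `ℕ^d`. -/
def delta : (Fin d → ℕ) → ℝ := fun k => if k = 0 then 1 else 0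

/-- Convolution of two (sub)probability weight functions on `ℕ^d`. -/
def conv (p q : (Fin d → ℕ) → ℝ) : (Fin d → ℕ) → ℝ :=
  fun k => ∑' a : {a : Fin d → ℕ // a ≤ k}, p a.1 * q (k - a.1)

/-- `n`-fold convolution power `p^{*n}` (with `p^{*0} = δ_0`). -/
def convIter (p : (Fin d → ℕ) → ℝ) : ℕ → (Fin d → ℕ) → ℝ
  | 0 => delta
  | n + 1 => conv p (convIter p n)

/-- One-step transition probabilities of the multitype GW process:
`P_1(x, ·) = p_1^{*x_1} * ⋯ * p_d^{*x_d}`. -/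
def trans (p : Fin d → (Fin d → ℕ) → ℝ) (x : Fin d → ℕ) : (Fin d → ℕ) → ℝ :=
  (List.ofFn (fun i => convIter (p i) (x i))).foldr conv delta

/-- `p` is a probability mass function on `ℕ^d`. -/
structure IsPMF (p : (Fin d → ℕ) → ℝ) : Prop where
  nonneg : ∀ k, 0 ≤ p k
  hasSum : HasSum p 1

/-- `μ x` is the law on path space of the multitype GW process with offspring
distributions `p` started at `x`: a probability measure whose finite-dimensional
distributions are products of one-step GW transition probabilities. -/
def IsGW (p : Fin d → (Fin d → ℕ) → ℝ)
    (μ : (Fin d → ℕ) → Measure (ℕ → Fin d → ℕ)) : Prop :=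
  (∀ x, IsProbabilityMeasure (μ x)) ∧
  ∀ (x : Fin d → ℕ) (k : ℕ) (xs : ℕ → Fin d → ℕ), xs 0 = x →
    μ x {ω | ∀ j ≤ k, ω j = xs j}
      = ENNReal.ofReal (∏ j ∈ Finset.range k, trans p (xs j) (xs (j + 1)))

/-- Total progeny of type `i` along a path (valued in `ℝ≥0∞`). -/
def Ntot (ω : ℕ → Fin d → ℕ) (i : Fin d) : ℝ≥0∞ := ∑' k, (ω k i : ℝ≥0∞)

lemma npow_zero (a : Fin d → ℝ) : npow a 0 = 1 := by simp [npow]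

lemma npow_add (a : Fin d → ℝ) (k l : Fin d → ℕ) : npow a (k + l) = npow a k * npow a l := by
  simp only [npow, Pi.add_apply, pow_add, Finset.prod_mul_distrib]

lemma npow_sum {ι : Type*} (a : Fin d → ℝ) (s : Finset ι) (f : ι → Fin d → ℕ) :
    npow a (∑ l ∈ s, f l) = ∏ l ∈ s, npow a (f l) := by
  simp only [npow, Finset.sum_apply, ← Finset.prod_pow_eq_pow_sum]
  exact Finset.prod_comm

lemma npow_nonneg {a : Fin d → ℝ} (ha : ∀ i, 0 ≤ a i) (k : Fin d → ℕ) : 0 ≤ npow a k :=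
  Finset.prod_nonneg fun j _ => pow_nonneg (ha j) _

lemma npow_inv (a : Fin d → ℝ) (n : Fin d → ℕ) :
    npow (fun i => (a i)⁻¹) n = ∏ i, a i ^ (-(n i : ℤ)) := by
  simp only [npow, zpow_neg, zpow_natCast, inv_pow]

lemma npow_eq_prod_zpow_sub (a : Fin d → ℝ) {k l n : Fin d → ℕ} (h : l + k = n) :
    npow a l = ∏ i, a i ^ ((n i : ℤ) - (k i : ℤ)) := by
  subst h
  simp only [npow, Pi.add_apply, Nat.cast_add, add_sub_cancel_right, zpow_natCast]

lemma npow_mul_npow_sub (a : Fin d → ℝ) {x k : Fin d → ℕ} (h : x ≤ k) :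
    npow a x * npow a (k - x) = npow a k := by
  rw [← npow_add, add_tsub_cancel_of_le h]

/-- The associated process has offspring laws `tilt a (f_i(a))⁻¹ (p i)`. -/
def tilt (a : Fin d → ℝ) (c : ℝ) (P : (Fin d → ℕ) → ℝ) : (Fin d → ℕ) → ℝ :=
  fun k => c * npow a k * P k

lemma tilt_one_delta (a : Fin d → ℝ) : tilt a 1 delta = delta := by
  funext k
  by_cases h : k = 0 <;> simp [tilt, delta, h, npow_zero]

lemma conv_tilt (a : Fin d → ℝ) (c c' : ℝ) (P Q : (Fin d → ℕ) → ℝ) :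
    conv (tilt a c P) (tilt a c' Q) = tilt a (c * c') (conv P Q) := by
  funext k
  simp only [conv, tilt, ← tsum_mul_left]
  refine tsum_congr fun ⟨x, hx⟩ => ?_
  rw [← npow_mul_npow_sub a hx]
  ring

lemma convIter_tilt (a : Fin d → ℝ) (c : ℝ) (P : (Fin d → ℕ) → ℝ) (m : ℕ) :
    convIter (tilt a c P) m = tilt a (c ^ m) (convIter P m) := by
  induction m with
  | zero => exact (tilt_one_delta a).symm
  | succ m ih => rw [convIter, convIter, ih, conv_tilt, pow_succ']

lemma foldr_conv_tilt (a : Fin d → ℝ) (L : List (ℝ × ((Fin d → ℕ) → ℝ))) :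
    (L.map fun cP => tilt a cP.1 cP.2).foldr conv delta
      = tilt a (L.map Prod.fst).prod ((L.map Prod.snd).foldr conv delta) := by
  induction L with
  | nil => exact (tilt_one_delta a).symm
  | cons cP L ih => simp only [List.map_cons, List.foldr_cons, List.prod_cons, ih, conv_tilt]

lemma trans_tilt (a c : Fin d → ℝ) (p : Fin d → (Fin d → ℕ) → ℝ) (x : Fin d → ℕ) :
    trans (fun i => tilt a (c i) (p i)) x = tilt a (npow c x) (trans p x) := by
  have h := foldr_conv_tilt a (List.ofFn fun i => (c i ^ x i, convIter (p i) (x i)))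
  simp only [List.map_ofFn, Function.comp_def, ← convIter_tilt, List.prod_ofFn] at h
  exact h

lemma conv_delta_left (q : (Fin d → ℕ) → ℝ) : conv delta q = q := by
  funext k
  rw [conv, tsum_eq_single ⟨0, zero_le⟩]
  · simp [delta]
  · rintro ⟨b, _⟩ hne
    have : b ≠ 0 := by simpa [Subtype.ext_iff] using hne
    simp [delta, this]

lemma trans_zero (p : Fin d → (Fin d → ℕ) → ℝ) : trans p 0 = delta := by
  suffices ∀ n, (List.replicate n delta).foldr conv delta = (delta : (Fin d → ℕ) → ℝ) by
    simpa [trans, convIter, List.ofFn_const] using this d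
  intro n
  induction n with
  | zero => rfl
  | succ n ih => rw [List.replicate_succ, List.foldr_cons, ih, conv_delta_left]

lemma prod_trans_tilt (a c : Fin d → ℝ) (p : Fin d → (Fin d → ℕ) → ℝ)
    (ω : ℕ → Fin d → ℕ) (m : ℕ) :
    ∏ j ∈ Finset.range m, trans (fun i => tilt a (c i) (p i)) (ω j) (ω (j + 1))
      = npow c (∑ j ∈ Finset.range m, ω j) * npow a (∑ j ∈ Finset.range m, ω (j + 1))
        * ∏ j ∈ Finset.range m, trans p (ω j) (ω (j + 1)) := by
  simp only [trans_tilt, tilt, npow_sum, Finset.prod_mul_distrib]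

lemma measurableSet_cylinder (xs : ℕ → Fin d → ℕ) (k : ℕ) :
    MeasurableSet {ω : ℕ → Fin d → ℕ | ∀ j ≤ k, ω j = xs j} := by
  simp only [Set.ofPred_forall]
  exact MeasurableSet.iInter fun j => MeasurableSet.iInter fun _ =>
    measurableSet_eq_fun (measurable_pi_apply j) measurable_const

lemma IsGW.measure_singleton {p : Fin d → (Fin d → ℕ) → ℝ}
    {μ : (Fin d → ℕ) → Measure (ℕ → Fin d → ℕ)} (hμ : IsGW p μ)
    {xs : ℕ → Fin d → ℕ} {m : ℕ} (hm : ∀ j, m ≤ j → xs j = 0) :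
    μ (xs 0) {xs} = ENNReal.ofReal (∏ j ∈ Finset.range m, trans p (xs j) (xs (j + 1))) := by
  set cyl : ℕ → Set (ℕ → Fin d → ℕ) := fun k => {ω | ∀ j ≤ k, ω j = xs j}
  have hsingleton : {xs} = ⋂ k, cyl k := by
    ext ω
    simp only [Set.mem_singleton_iff, Set.mem_iInter, cyl, Set.mem_ofPred_eq]
    exact ⟨fun h k j _ => h ▸ rfl, fun h => funext fun j => h j j le_rfl⟩
  have hanti : Antitone cyl := fun k l hkl ω hω j hj => hω j (hj.trans hkl)
  have hlim := tendsto_measure_iInter_atTop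
    (fun k => (measurableSet_cylinder xs k).nullMeasurableSet) hanti
    ⟨0, by rw [hμ.2 _ 0 xs rfl]; exact ENNReal.ofReal_ne_top⟩
  have hstable : ∀ k, m ≤ k → μ (xs 0) (cyl k)
      = ENNReal.ofReal (∏ j ∈ Finset.range m, trans p (xs j) (xs (j + 1))) := by
    intro k hk
    rw [hμ.2 _ k xs rfl]
    congr 1
    refine (Finset.prod_subset (Finset.range_subset_range.2 hk) fun j _ hj => ?_).symm
    have hjm : m ≤ j := not_lt.1 (Finset.mem_range.not.1 hj)
    rw [hm j hjm, hm (j + 1) (hjm.trans j.le_succ), trans_zero, delta, if_pos rfl]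
  rw [hsingleton]
  exact tendsto_nhds_unique hlim
    (tendsto_const_nhds.congr' (eventually_atTop.2 ⟨m, fun k hk => (hstable k hk).symm⟩))

lemma IsGW.measure_singleton_of_ne {p : Fin d → (Fin d → ℕ) → ℝ}
    {μ : (Fin d → ℕ) → Measure (ℕ → Fin d → ℕ)} (hμ : IsGW p μ)
    {x : Fin d → ℕ} {ω : ℕ → Fin d → ℕ} (hx : ω 0 ≠ x) : μ x {ω} = 0 := by
  have := hμ.1 x
  have hstart : μ x {ω' | ω' 0 = x} = 1 := by
    simpa [Nat.le_zero] using hμ.2 x 0 (fun _ => x) rfl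
  refine measure_mono_null (fun ω' h => ?_)
    ((prob_compl_eq_zero_iff (measurableSet_eq_fun (measurable_pi_apply 0) measurable_const)).2
      hstart)
  rw [Set.mem_singleton_iff.1 h]
  exact hx

lemma IsGW.measure_singleton_tilt {a c : Fin d → ℝ} (ha : ∀ i, 0 ≤ a i) (hc : ∀ i, 0 ≤ c i)
    {p : Fin d → (Fin d → ℕ) → ℝ} {μ μbar : (Fin d → ℕ) → Measure (ℕ → Fin d → ℕ)}
    (hμ : IsGW p μ) (hμbar : IsGW (fun i => tilt a (c i) (p i)) μbar)
    {ω : ℕ → Fin d → ℕ} {m : ℕ} (hm : ∀ j, m ≤ j → ω j = 0) :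
    μbar (ω 0) {ω}
      = ENNReal.ofReal (npow c (∑ j ∈ Finset.range m, ω j)
          * npow a (∑ j ∈ Finset.range m, ω (j + 1))) * μ (ω 0) {ω} := by
  rw [hμbar.measure_singleton hm, hμ.measure_singleton hm, prod_trans_tilt,
    ENNReal.ofReal_mul (mul_nonneg (npow_nonneg hc _) (npow_nonneg ha _))]

lemma finite_support_of_Ntot_eq {ω : ℕ → Fin d → ℕ} {n : Fin d → ℕ}
    (h : ∀ i, Ntot ω i = n i) : (Function.support ω).Finite := by
  have hcoord : ∀ i, (Function.support fun j => ω j i).Finite := fun i => by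
    have hne : ∑' j, (ω j i : ℝ≥0∞) ≠ ⊤ := by
      rw [← Ntot, h i]; exact ENNReal.natCast_ne_top _
    refine (ENNReal.finite_const_le_of_tsum_ne_top hne one_ne_zero).subset fun j hj => ?_
    simpa [Nat.one_le_iff_ne_zero] using hj
  refine (Set.finite_iUnion hcoord).subset fun j hj => ?_
  obtain ⟨i, hi⟩ := Function.ne_iff.1 hj
  exact Set.mem_iUnion.2 ⟨i, hi⟩

lemma exists_eq_zero_of_Ntot_eq {ω : ℕ → Fin d → ℕ} {n : Fin d → ℕ}
    (h : ∀ i, Ntot ω i = n i) : ∃ m, ∀ j, m ≤ j → ω j = 0 := by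
  obtain ⟨M, hM⟩ := (finite_support_of_Ntot_eq h).bddAbove
  exact ⟨M + 1, fun j hj => Function.notMem_support.1 fun hj' => by have := hM hj'; omega⟩

lemma countable_setOf_Ntot_eq (n : Fin d → ℕ) :
    {ω : ℕ → Fin d → ℕ | ∀ i, Ntot ω i = n i}.Countable :=
  (Set.countable_range fun f : ℕ →₀ (Fin d → ℕ) => ⇑f).mono fun ω hω =>
    Set.mem_range.2 ⟨Finsupp.ofSupportFinite ω (finite_support_of_Ntot_eq hω),
      Finsupp.ofSupportFinite_coe⟩

lemma sum_range_eq_of_Ntot_eq {ω : ℕ → Fin d → ℕ} {n : Fin d → ℕ}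
    (h : ∀ i, Ntot ω i = n i) {m : ℕ} (hm : ∀ j, m ≤ j → ω j = 0) :
    ∑ j ∈ Finset.range m, ω j = n := by
  funext i
  have hi := h i
  rw [Ntot, tsum_eq_sum (s := Finset.range m) fun j hj => by
    simp [hm j (not_lt.1 (Finset.mem_range.not.1 hj))]] at hi
  rw [Finset.sum_apply]
  exact_mod_cast hi

lemma measure_eq_mul_of_countable {α : Type*} [MeasurableSpace α] [MeasurableSingletonClass α]
    {μ ν : Measure α} {s : Set α} (hs : s.Countable) {c : ℝ≥0∞}
    (h : ∀ x ∈ s, ν {x} = c * μ {x}) : ν s = c * μ s := by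
  have hsum : ∀ μ : Measure α, ∑' x : s, μ {x.1} = μ s := fun μ =>
    tsum_measure_preimage_singleton hs (f := id) fun _ _ => measurableSet_singleton _
  rw [← hsum, ← hsum, ← ENNReal.tsum_mul_left]
  exact tsum_congr fun x => h x x.2

theorem assoc_total_progeny_general {d : ℕ} (p : Fin d → (Fin d → ℕ) → ℝ)
    (hp : ∀ i, IsPMF (p i))
    (a : Fin d → ℝ) (ha : ∀ i, 0 < a i)
    (fa : Fin d → ℝ) (hfadef : ∀ i, fa i = ∑' k, p i k * npow a k)
    (pbar : Fin d → (Fin d → ℕ) → ℝ)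
    (hpbar : ∀ i k, pbar i k = npow a k * p i k / fa i)
    (μ μbar : (Fin d → ℕ) → Measure (ℕ → Fin d → ℕ))
    (hμ : IsGW p μ) (hμbar : IsGW pbar μbar) :
    ∀ (k0 n : Fin d → ℕ),
      μbar k0 {ω | ∀ i, Ntot ω i = (n i : ℝ≥0∞)}
        = ENNReal.ofReal
            ((∏ i, a i ^ ((n i : ℤ) - (k0 i : ℤ))) * ∏ i, fa i ^ (-(n i : ℤ))) *
          μ k0 {ω | ∀ i, Ntot ω i = (n i : ℝ≥0∞)} := by
  intro k0 n
  have ha' : ∀ i, 0 ≤ a i := fun i => (ha i).le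
  have hfa : ∀ i, 0 ≤ (fa i)⁻¹ := fun i => inv_nonneg.2 <| (hfadef i).symm ▸
    tsum_nonneg fun k => mul_nonneg ((hp i).nonneg k) (npow_nonneg ha' k)
  have hpbar_tilt : pbar = fun i => tilt a (fa i)⁻¹ (p i) := by
    funext i k
    rw [hpbar, tilt, div_eq_inv_mul, mul_assoc]
  rw [hpbar_tilt] at hμbar
  refine measure_eq_mul_of_countable (countable_setOf_Ntot_eq n) fun ω hω => ?_
  by_cases h0 : ω 0 = k0
  · subst h0
    obtain ⟨m, hm⟩ := exists_eq_zero_of_Ntot_eq hω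
    have hshift : ∑ j ∈ Finset.range m, ω (j + 1) + ω 0 = n := by
      rw [← Finset.sum_range_succ', Finset.sum_range_succ, hm m le_rfl, add_zero,
        sum_range_eq_of_Ntot_eq hω hm]
    rw [IsGW.measure_singleton_tilt ha' hfa hμ hμbar hm, sum_range_eq_of_Ntot_eq hω hm, npow_inv,
      npow_eq_prod_zpow_sub a hshift, mul_comm (∏ i, fa i ^ _)]
  · rw [hμbar.measure_singleton_of_ne h0, hμ.measure_singleton_of_ne h0, mul_zero]

/-- the total progeny of the associated process satisfies
`P_k(N̄ = n) = a^{n-k} f(a)^{-n} P_k(N = n)`. -/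
theorem assoc_total_progeny {d : ℕ} (p : Fin d → (Fin d → ℕ) → ℝ)
    (hp : ∀ i, IsPMF (p i))
    (a : Fin d → ℝ) (ha : ∀ i, 0 < a i)
    (hfa : ∀ i, Summable fun k => p i k * npow a k)
    (fa : Fin d → ℝ) (hfadef : ∀ i, fa i = ∑' k, p i k * npow a k)
    (pbar : Fin d → (Fin d → ℕ) → ℝ)
    (hpbar : ∀ i k, pbar i k = npow a k * p i k / fa i)
    (μ μbar : (Fin d → ℕ) → Measure (ℕ → Fin d → ℕ))
    (hμ : IsGW p μ) (hμbar : IsGW pbar μbar) :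
    ∀ (k0 n : Fin d → ℕ),
      μbar k0 {ω | ∀ i, Ntot ω i = (n i : ℝ≥0∞)}
        = ENNReal.ofReal
            ((∏ i, a i ^ ((n i : ℤ) - (k0 i : ℤ))) * ∏ i, fa i ^ (-(n i : ℤ))) *
          μ k0 {ω | ∀ i, Ntot ω i = (n i : ℝ≥0∞)} :=
  assoc_total_progeny_general p hp a ha fa hfadef pbar hpbar μ μbar hμ hμbar

end GW
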